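/- arXiv:2605.28036 — 5 statements merged into one kernel-verified Lean document; each statement's English description precedes it below -/
import Mathlib

section
/- Let μ be a probability measure on a measurable space X, let A : X → 𝒜 be a measurable map to a finite set of groups, and let f : X → (0,∞) be measurable with 0 < ∫ f^w dμ < ∞. Define the tilted measure μ_w by dμ_w = f^w / (∫ f^w dμ) dμ. If for all groups a, a' the conditional laws of f given A = a and A = a' under μ coincide (and μ(A = a) > 0 for all a), then for all a, a': μ_w(A = a) / μ_w(A = a') = μ(A = a) / μ(A = a'). -/
/-! Tilting multiplies the mass of a set `s` by the `μ[|s]`-average of the density. Since `f` has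
the same law on every group `A = a`, so does `f ^ w`, and every group mass is multiplied by the
same finite nonzero factor: the ratios survive. -/

open MeasureTheory ProbabilityTheory

/-- The `f^w`-tilted (guided) measure `μ_w` with `dμ_w = f^w dμ / ∫ f^w dμ`. -/
noncomputable def tilt {X : Type} [MeasurableSpace X]
    (μ : Measure X) (f : X → ℝ) (w : ℝ) : Measure X :=
  (∫⁻ x, ENNReal.ofReal (f x ^ w) ∂μ)⁻¹ • μ.withDensity (fun x => ENNReal.ofReal (f x ^ w))

open scoped ENNReal

section

variable {X : Type*} [MeasurableSpace X] {μ : Measure X} {g : X → ℝ≥0∞} {s : Set X}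

lemma lintegral_ne_zero_of_forall_ne_zero (hg : Measurable g) (hg0 : ∀ x, g x ≠ 0)
    (hμ : μ ≠ 0) : ∫⁻ x, g x ∂μ ≠ 0 := by
  have hsupp : Function.support g = Set.univ := Set.eq_univ_of_forall hg0
  rw [← pos_iff_ne_zero, lintegral_pos_iff_support hg, hsupp]
  exact Measure.measure_univ_pos.mpr hμ

lemma setLIntegral_eq_measure_mul_lintegral_cond [IsFiniteMeasure μ] :
    ∫⁻ x in s, g x ∂μ = μ s * ∫⁻ x, g x ∂μ[|s] := by
  by_cases hs : μ s = 0
  · simp [hs, Measure.restrict_eq_zero.mpr hs]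
  · rw [ProbabilityTheory.cond, lintegral_smul_measure, smul_eq_mul, ← mul_assoc,
      ENNReal.mul_inv_cancel hs (measure_ne_top μ s), one_mul]

lemma withDensity_apply_eq_measure_mul_lintegral_cond [IsFiniteMeasure μ] (hs : MeasurableSet s) :
    μ.withDensity g s = μ s * ∫⁻ x, g x ∂μ[|s] := by
  rw [withDensity_apply _ hs, setLIntegral_eq_measure_mul_lintegral_cond]

lemma lintegral_cond_ne_top [IsFiniteMeasure μ] (hg : ∫⁻ x, g x ∂μ ≠ ∞) (hs : μ s ≠ 0) :
    ∫⁻ x, g x ∂μ[|s] ≠ ∞ := by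
  intro htop
  have hle := setLIntegral_le_lintegral s g (μ := μ)
  rw [setLIntegral_eq_measure_mul_lintegral_cond, htop, ENNReal.mul_top hs, top_le_iff] at hle
  exact hg hle

end

theorem tilt_preserves_group_ratio_general
    {X : Type} [MeasurableSpace X] (μ : Measure X) [IsProbabilityMeasure μ]
    {𝒜 : Type} [MeasurableSpace 𝒜] [MeasurableSingletonClass 𝒜]
    (A : X → 𝒜) (hA : Measurable A) (hpos : ∀ a, μ (A ⁻¹' {a}) ≠ 0)
    (f : X → ℝ) (hf : Measurable f) (hfpos : ∀ x, 0 < f x)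
    (w : ℝ)
    (hint : Integrable (fun x => f x ^ w) μ)
    (hcond : ∀ a a' : 𝒜,
      (ProbabilityTheory.cond μ (A ⁻¹' {a})).map f
        = (ProbabilityTheory.cond μ (A ⁻¹' {a'})).map f) :
    ∀ a a' : 𝒜,
      tilt μ f w (A ⁻¹' {a}) / tilt μ f w (A ⁻¹' {a'})
        = μ (A ⁻¹' {a}) / μ (A ⁻¹' {a'}) := by
  intro a a'
  set φ : ℝ → ℝ≥0∞ := fun y => ENNReal.ofReal (y ^ w)
  have hφ : Measurable φ := (measurable_id.pow_const w).ennreal_ofReal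
  have hφf_ne_zero : ∀ x, φ (f x) ≠ 0 := fun x =>
    (ENNReal.ofReal_pos.mpr (Real.rpow_pos_of_pos (hfpos x) w)).ne'
  set Z := ∫⁻ x, φ (f x) ∂μ
  set c := ∫⁻ x, φ (f x) ∂μ[|A ⁻¹' {a}]
  have hc : ∀ b, ∫⁻ x, φ (f x) ∂μ[|A ⁻¹' {b}] = c := fun b => by
    rw [← lintegral_map hφ hf, hcond b a, lintegral_map hφ hf]
  have htilt : ∀ b, tilt μ f w (A ⁻¹' {b}) = (Z⁻¹ * c) * μ (A ⁻¹' {b}) := fun b => by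
    rw [tilt, Measure.smul_apply, smul_eq_mul,
      withDensity_apply_eq_measure_mul_lintegral_cond (hA (measurableSet_singleton b)), hc b]
    ring
  have hZ_ne_top : Z ≠ ∞ := hint.lintegral_lt_top.ne
  have hZ_ne_zero : Z ≠ 0 :=
    lintegral_ne_zero_of_forall_ne_zero (hφ.comp hf) hφf_ne_zero (IsProbabilityMeasure.ne_zero μ)
  have hc_ne_zero : c ≠ 0 :=
    haveI := cond_isProbabilityMeasure (hpos a)
    lintegral_ne_zero_of_forall_ne_zero (hφ.comp hf) hφf_ne_zero (IsProbabilityMeasure.ne_zero _)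
  have hc_ne_top : c ≠ ∞ := lintegral_cond_ne_top hZ_ne_top (hpos a)
  rw [htilt, htilt]
  exact ENNReal.mul_div_mul_left _ _ (mul_ne_zero (ENNReal.inv_ne_zero.mpr hZ_ne_top) hc_ne_zero)
    (ENNReal.mul_ne_top (ENNReal.inv_ne_top.mpr hZ_ne_zero) hc_ne_top)

/-- SDP preserves the group ratio of the tilted (target) distribution: if the guidance
function `f` has the same conditional law in every group, then exponential tilting by
`f^w` preserves the ratio of group probabilities. -/
theorem tilt_preserves_group_ratio
    {X : Type} [MeasurableSpace X] (μ : Measure X) [IsProbabilityMeasure μ]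
    {𝒜 : Type} [Fintype 𝒜] [MeasurableSpace 𝒜] [MeasurableSingletonClass 𝒜]
    (A : X → 𝒜) (hA : Measurable A) (hpos : ∀ a, μ (A ⁻¹' {a}) ≠ 0)
    (f : X → ℝ) (hf : Measurable f) (hfpos : ∀ x, 0 < f x)
    (w : ℝ)
    (hint : Integrable (fun x => f x ^ w) μ)
    (hIpos : 0 < ∫ x, f x ^ w ∂μ)
    (hcond : ∀ a a' : 𝒜,
      (ProbabilityTheory.cond μ (A ⁻¹' {a})).map f
        = (ProbabilityTheory.cond μ (A ⁻¹' {a'})).map f) :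
    ∀ a a' : 𝒜,
      tilt μ f w (A ⁻¹' {a}) / tilt μ f w (A ⁻¹' {a'})
        = μ (A ⁻¹' {a}) / μ (A ⁻¹' {a'}) :=
  tilt_preserves_group_ratio_general μ A hA hpos f hf hfpos w hint hcond
end

section
/- Under the hypotheses of the tilting theorem (f has identical conditional law in every group), if additionally μ(A = a) = μ(A = a') for two groups a, a', then μ_w(A = a) = μ_w(A = a') for every w ≥ 0 with ∫ f^w dμ finite and positive. -/
open MeasureTheory ProbabilityTheory

/-!
Up to the common normalisation, `μ_w(A = a) = ∫_{A = a} f^w dμ`, and this equals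
`μ(A = a)` times the integral of `y ↦ y^w` against the law of `f` under `μ(· | A = a)`.
Strong Demographic Parity makes the second factor independent of the group, and balance makes
the first one independent of it as well.
-/

section

variable {X Y : Type*} [MeasurableSpace X] [MeasurableSpace Y] {μ : Measure X} {s : Set X}

-- When `μ s = 0` both sides vanish, because then `μ[|s] = ∞ • 0 = 0`.
lemma measure_smul_cond (hs : μ s ≠ ⊤) : μ s • μ[|s] = μ.restrict s := by
  by_cases h0 : μ s = 0
  · simp [h0, Measure.restrict_eq_zero.mpr h0]
  · rw [ProbabilityTheory.cond, smul_smul, ENNReal.mul_inv_cancel h0 hs, one_smul]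

lemma setLIntegral_comp_eq_mul_lintegral_map_cond (hs : μ s ≠ ⊤) {f : X → Y}
    (hf : Measurable f) {g : Y → ENNReal} (hg : Measurable g) :
    ∫⁻ x in s, g (f x) ∂μ = μ s * ∫⁻ y, g y ∂(μ[|s]).map f := by
  rw [lintegral_map hg hf, ← smul_eq_mul, ← lintegral_smul_measure, measure_smul_cond hs]

end

lemma tilt_apply_eq_mul_lintegral_map_cond {X : Type} [MeasurableSpace X] (μ : Measure X)
    [IsFiniteMeasure μ] {f : X → ℝ} (hf : Measurable f) (w : ℝ) (s : Set X) :
    tilt μ f w s = (∫⁻ x, ENNReal.ofReal (f x ^ w) ∂μ)⁻¹ *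
      (μ s * ∫⁻ y, ENNReal.ofReal (y ^ w) ∂(μ[|s]).map f) := by
  rw [tilt, Measure.smul_apply, smul_eq_mul, withDensity_apply',
    setLIntegral_comp_eq_mul_lintegral_map_cond (measure_ne_top μ s) hf
      (g := fun y => ENNReal.ofReal (y ^ w)) (by fun_prop)]

theorem tilt_preserves_fairness_general
    {X : Type} [MeasurableSpace X] (μ : Measure X) [IsProbabilityMeasure μ]
    {𝒜 : Type} (A : X → 𝒜) (f : X → ℝ) (hf : Measurable f)
    (hcond : ∀ a a' : 𝒜,
      (ProbabilityTheory.cond μ (A ⁻¹' {a})).map f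
        = (ProbabilityTheory.cond μ (A ⁻¹' {a'})).map f)
    (a a' : 𝒜) (hbal : μ (A ⁻¹' {a}) = μ (A ⁻¹' {a'})) :
    ∀ w : ℝ, 0 ≤ w → Integrable (fun x => f x ^ w) μ → (0 < ∫ x, f x ^ w ∂μ) →
      tilt μ f w (A ⁻¹' {a}) = tilt μ f w (A ⁻¹' {a'}) := by
  intro w _ _ _
  rw [tilt_apply_eq_mul_lintegral_map_cond μ hf, tilt_apply_eq_mul_lintegral_map_cond μ hf,
    hbal, hcond a a']

/-- A fair (balanced) base distribution remains fair under guidance of any scale when the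
guidance function satisfies Strong Demographic Parity: if `f` has identical conditional
law in every group and `μ(A=a) = μ(A=a')`, then `μ_w(A=a) = μ_w(A=a')` for every
`w ≥ 0` with `∫ f^w dμ` finite and positive. -/
theorem tilt_preserves_fairness
    {X : Type} [MeasurableSpace X] (μ : Measure X) [IsProbabilityMeasure μ]
    {𝒜 : Type} [Fintype 𝒜] [MeasurableSpace 𝒜] [MeasurableSingletonClass 𝒜]
    (A : X → 𝒜) (hA : Measurable A) (hpos : ∀ a, μ (A ⁻¹' {a}) ≠ 0)
    (f : X → ℝ) (hf : Measurable f) (hfpos : ∀ x, 0 < f x)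
    (hcond : ∀ a a' : 𝒜,
      (ProbabilityTheory.cond μ (A ⁻¹' {a})).map f
        = (ProbabilityTheory.cond μ (A ⁻¹' {a'})).map f)
    (a a' : 𝒜) (hbal : μ (A ⁻¹' {a}) = μ (A ⁻¹' {a'})) :
    ∀ w : ℝ, 0 ≤ w → Integrable (fun x => f x ^ w) μ → (0 < ∫ x, f x ^ w ∂μ) →
      tilt μ f w (A ⁻¹' {a}) = tilt μ f w (A ⁻¹' {a'}) :=
  tilt_preserves_fairness_general μ A f hf hcond a a' hbal
end

section
/- Let μ, ν be probability measures on X with μ(A=a) > 0 for all groups a of a finite-valued measurable A, and suppose ν ≪ μ with density proportional to g : X → (0,∞) where g is σ(A)-conditionally independent of A in the sense that the conditional law of g under μ given A = a is the same for every a. Then ν(A = a) = μ(A = a) for every a. -/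
open MeasureTheory ProbabilityTheory ENNReal

/-- If `ν` has density proportional to `g > 0` with respect to `μ`, and the conditional
law of `g` given `A = a` under `μ` is the same for every group `a`, then the group
marginals are preserved: `ν(A = a) = μ(A = a)` for every `a`. -/
theorem reweighting_preserves_group_marginals
    {X : Type} [MeasurableSpace X] (μ : Measure X) [IsProbabilityMeasure μ]
    {𝒜 : Type} [Fintype 𝒜] [MeasurableSpace 𝒜] [MeasurableSingletonClass 𝒜]
    (A : X → 𝒜) (hA : Measurable A) (hpos : ∀ a, μ (A ⁻¹' {a}) ≠ 0)
    (g : X → ℝ) (hg : Measurable g) (hgpos : ∀ x, 0 < g x)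
    (hgint : Integrable g μ) (hgI : 0 < ∫ x, g x ∂μ)
    (ν : Measure X)
    (hν : ν = (∫⁻ x, ENNReal.ofReal (g x) ∂μ)⁻¹
        • μ.withDensity (fun x => ENNReal.ofReal (g x)))
    (hcond : ∀ a a' : 𝒜,
      (ProbabilityTheory.cond μ (A ⁻¹' {a})).map g
        = (ProbabilityTheory.cond μ (A ⁻¹' {a'})).map g) :
    ∀ a : 𝒜, ν (A ⁻¹' {a}) = μ (A ⁻¹' {a}) := by
  intro a
  set f : X → ENNReal := fun x => ENNReal.ofReal (g x) with hf
  have hfm : Measurable f := hg.ennreal_ofReal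
  set s : 𝒜 → Set X := fun b => A ⁻¹' {b} with hs
  have hms : ∀ b, MeasurableSet (s b) := fun b => hA (measurableSet_singleton b)
  have hμst : ∀ b, μ (s b) ≠ ∞ := fun b => measure_ne_top μ _
  set c : ℝ≥0∞ := (μ (s a))⁻¹ * ∫⁻ x in s a, f x ∂μ with hc
  -- equal conditional means
  have hmean : ∀ b, (μ (s b))⁻¹ * ∫⁻ x in s b, f x ∂μ = c := by
    intro b
    have h2 : ∫⁻ y, ENNReal.ofReal y ∂((cond μ (s b)).map g)
        = ∫⁻ y, ENNReal.ofReal y ∂((cond μ (s a)).map g) := by rw [hcond b a]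
    rwa [lintegral_map ENNReal.measurable_ofReal hg,
      lintegral_map ENNReal.measurable_ofReal hg,
      ProbabilityTheory.cond, ProbabilityTheory.cond,
      lintegral_smul_measure, lintegral_smul_measure] at h2
  have hIb : ∀ b, ∫⁻ x in s b, f x ∂μ = c * μ (s b) := by
    intro b
    have := hmean b
    calc ∫⁻ x in s b, f x ∂μ
        = (μ (s b)) * ((μ (s b))⁻¹ * ∫⁻ x in s b, f x ∂μ) := by
          rw [← mul_assoc, ENNReal.mul_inv_cancel (hpos b) (hμst b), one_mul]
      _ = c * μ (s b) := by rw [this, mul_comm]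
  -- total mass
  have hT : ∫⁻ x, f x ∂μ = c := by
    have h1 : (μ.withDensity f) Set.univ = ∫⁻ x, f x ∂μ := by
      rw [withDensity_apply f MeasurableSet.univ, Measure.restrict_univ]
    have h2 : (∑ b : 𝒜, (μ.withDensity f) (s b)) = (μ.withDensity f) Set.univ := by
      have := sum_measure_preimage_singleton (μ := μ.withDensity f) (Finset.univ : Finset 𝒜)
        (f := A) (fun b _ => hms b)
      simpa using this
    have h3 : (∑ b : 𝒜, (μ.withDensity f) (s b)) = c := by
      have : ∀ b : 𝒜, (μ.withDensity f) (s b) = c * μ (s b) := by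
        intro b; rw [withDensity_apply f (hms b)]; exact hIb b
      rw [Finset.sum_congr rfl (fun b _ => this b), ← Finset.mul_sum]
      have h4 : (∑ b : 𝒜, μ (s b)) = 1 := by
        have := sum_measure_preimage_singleton (μ := μ) (Finset.univ : Finset 𝒜)
          (f := A) (fun b _ => hms b)
        simpa using this
      rw [h4, mul_one]
    rw [← h1, ← h2, h3]
  have hTval : ∫⁻ x, f x ∂μ = ENNReal.ofReal (∫ x, g x ∂μ) :=
    (ofReal_integral_eq_lintegral_ofReal hgint
      (Filter.Eventually.of_forall fun x => (hgpos x).le)).symm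
  have hc0 : c ≠ 0 := by
    rw [← hT, hTval]; simpa using hgI
  have hctop : c ≠ ∞ := by rw [← hT, hTval]; exact ENNReal.ofReal_ne_top
  rw [hν]
  show ((∫⁻ x, f x ∂μ)⁻¹ • μ.withDensity f) (s a) = μ (s a)
  rw [Measure.smul_apply, smul_eq_mul, withDensity_apply f (hms a), hIb a, hT,
    ← mul_assoc, ENNReal.inv_mul_cancel hc0 hctop, one_mul]
end

section
/- Monotonicity of moment ratios under likelihood-ratio ordering: let U, V be positive random variables with E[U^w], E[V^w] finite for all w in [0, W]. If the law of U stochastically dominates that of V in the likelihood-ratio order (densities p, q with p/q nondecreasing), then the map w ↦ E[U^w]/E[V^w] is nondecreasing on [0, W]. -/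
/-!
Write `A(w) = E[U^w] = ∫ p(x) x^w dλ` and `B(w) = E[V^w] = ∫ q(x) x^w dλ`. Monotonicity of `A/B` is
the cross inequality `A(w₁) B(w₂) ≤ A(w₂) B(w₁)` for `w₁ ≤ w₂`. Writing both products as double
integrals and symmetrising in `(x, y)`, it suffices to compare the integrands pointwise, and for
`0 < x ≤ y` the difference of the symmetrised integrands is
`(xy)^{w₁} (p(y) q(x) - p(x) q(y)) (y^{w₂-w₁} - x^{w₂-w₁}) ≥ 0`.
-/

open MeasureTheory

open scoped ENNReal

theorem lintegral_lintegral_add_mul_swap {α : Type*} [MeasurableSpace α] {μ : Measure α}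
    {f g : α → ℝ≥0∞} (hf : Measurable f) (hg : Measurable g) :
    ∫⁻ x, ∫⁻ y, (f x * g y + f y * g x) ∂μ ∂μ = 2 * ((∫⁻ x, f x ∂μ) * ∫⁻ x, g x ∂μ) := by
  have inner : ∀ x, ∫⁻ y, (f x * g y + f y * g x) ∂μ
      = f x * (∫⁻ y, g y ∂μ) + (∫⁻ y, f y ∂μ) * g x := fun x => by
    rw [lintegral_add_left (hg.const_mul _), lintegral_const_mul _ hg, lintegral_mul_const _ hf]
  simp only [inner]
  rw [lintegral_add_left (hf.mul_const _), lintegral_mul_const _ hf, lintegral_const_mul _ hg,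
    two_mul]

theorem lintegral_mul_lintegral_le_of_swap_le {α : Type*} [MeasurableSpace α] {μ : Measure α}
    {f₁ f₂ g₁ g₂ : α → ℝ≥0∞} (hf₁ : Measurable f₁) (hf₂ : Measurable f₂)
    (hg₁ : Measurable g₁) (hg₂ : Measurable g₂)
    (h : ∀ x y, f₁ x * g₂ y + f₁ y * g₂ x ≤ f₂ x * g₁ y + f₂ y * g₁ x) :
    (∫⁻ x, f₁ x ∂μ) * (∫⁻ x, g₂ x ∂μ) ≤ (∫⁻ x, f₂ x ∂μ) * ∫⁻ x, g₁ x ∂μ := by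
  have hdouble : ∫⁻ x, ∫⁻ y, (f₁ x * g₂ y + f₁ y * g₂ x) ∂μ ∂μ ≤
      ∫⁻ x, ∫⁻ y, (f₂ x * g₁ y + f₂ y * g₁ x) ∂μ ∂μ :=
    lintegral_mono fun x => lintegral_mono fun y => h x y
  rw [lintegral_lintegral_add_mul_swap hf₁ hg₂, lintegral_lintegral_add_mul_swap hf₂ hg₁] at hdouble
  exact (ENNReal.mul_le_mul_iff_right two_ne_zero ENNReal.ofNat_ne_top).mp hdouble

theorem mul_rpow_swap_le_of_le {p q : ℝ → ℝ} {w₁ w₂ x y : ℝ} (hw : w₁ ≤ w₂)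
    (hx : 0 < x) (hxy : x ≤ y) (hpq : p x * q y ≤ p y * q x) :
    p x * x ^ w₁ * (q y * y ^ w₂) + p y * y ^ w₁ * (q x * x ^ w₂) ≤
      p x * x ^ w₂ * (q y * y ^ w₁) + p y * y ^ w₂ * (q x * x ^ w₁) := by
  have hy : 0 < y := hx.trans_le hxy
  have hsplit : ∀ z : ℝ, 0 < z → z ^ w₂ = z ^ w₁ * z ^ (w₂ - w₁) := fun z hz => by
    rw [← Real.rpow_add hz, add_sub_cancel]
  have hgap : 0 ≤ (p y * q x - p x * q y) * (x ^ w₁ * y ^ w₁) *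
      (y ^ (w₂ - w₁) - x ^ (w₂ - w₁)) :=
    mul_nonneg (mul_nonneg (by linarith) (by positivity))
      (sub_nonneg.mpr (Real.rpow_le_rpow hx.le hxy (sub_nonneg.mpr hw)))
  rw [hsplit x hx, hsplit y hy]
  linear_combination hgap

theorem ofReal_mul_rpow_swap_le {p q : ℝ → ℝ} (hp0 : ∀ x, 0 ≤ p x) (hq0 : ∀ x, 0 ≤ q x)
    (hsupp : ∀ x ∈ Set.Iic (0 : ℝ), p x = 0 ∧ q x = 0)
    (hlr : ∀ x y, x ≤ y → p x * q y ≤ p y * q x) {w₁ w₂ : ℝ} (hw : w₁ ≤ w₂) (x y : ℝ) :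
    ENNReal.ofReal (p x * x ^ w₁) * ENNReal.ofReal (q y * y ^ w₂) +
        ENNReal.ofReal (p y * y ^ w₁) * ENNReal.ofReal (q x * x ^ w₂) ≤
      ENNReal.ofReal (p x * x ^ w₂) * ENNReal.ofReal (q y * y ^ w₁) +
        ENNReal.ofReal (p y * y ^ w₂) * ENNReal.ofReal (q x * x ^ w₁) := by
  rcases le_or_gt x 0 with hx | hx
  · simp [(hsupp x hx).1, (hsupp x hx).2]
  rcases le_or_gt y 0 with hy | hy
  · simp [(hsupp y hy).1, (hsupp y hy).2]
  have hnn : ∀ r : ℝ → ℝ, (∀ z, 0 ≤ r z) → ∀ z, 0 < z → ∀ w : ℝ, 0 ≤ r z * z ^ w :=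
    fun r hr z hz w => mul_nonneg (hr z) (Real.rpow_nonneg hz.le w)
  have hpx := hnn p hp0 x hx
  have hpy := hnn p hp0 y hy
  have hqx := hnn q hq0 x hx
  have hqy := hnn q hq0 y hy
  rw [← ENNReal.ofReal_mul (hpx w₁), ← ENNReal.ofReal_mul (hpy w₁), ← ENNReal.ofReal_mul (hpx w₂),
    ← ENNReal.ofReal_mul (hpy w₂),
    ← ENNReal.ofReal_add (mul_nonneg (hpx w₁) (hqy w₂)) (mul_nonneg (hpy w₁) (hqx w₂)),
    ← ENNReal.ofReal_add (mul_nonneg (hpx w₂) (hqy w₁)) (mul_nonneg (hpy w₂) (hqx w₁))]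
  refine ENNReal.ofReal_le_ofReal ?_
  rcases le_total x y with hxy | hyx
  · exact mul_rpow_swap_le_of_le hw hx hxy (hlr x y hxy)
  · linarith [mul_rpow_swap_le_of_le (p := p) (q := q) hw hy hyx (hlr y x hyx)]

theorem integral_pos_of_forall_pos {α : Type*} [MeasurableSpace α] {μ : Measure α} [NeZero μ]
    {f : α → ℝ} (hf : ∀ x, 0 < f x) (hfi : Integrable f μ) : 0 < ∫ x, f x ∂μ := by
  rw [integral_pos_iff_support_of_nonneg (fun x => (hf x).le) hfi,
    Function.support_eq_univ fun x => (hf x).ne']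
  exact Measure.measure_univ_pos.mpr (NeZero.ne μ)

theorem monotoneOn_toReal_div_toReal {α : Type*} [Preorder α] {A B : α → ℝ≥0∞} {s : Set α}
    (hA : ∀ w ∈ s, A w ≠ ⊤) (hB : ∀ w ∈ s, B w ≠ ⊤) (hB0 : ∀ w ∈ s, 0 < (B w).toReal)
    (hcross : ∀ w₁ ∈ s, ∀ w₂ ∈ s, w₁ ≤ w₂ → A w₁ * B w₂ ≤ A w₂ * B w₁) :
    MonotoneOn (fun w => (A w).toReal / (B w).toReal) s := by
  intro w₁ hw₁ w₂ hw₂ hw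
  rw [div_le_div_iff₀ (hB0 w₁ hw₁) (hB0 w₂ hw₂), ← ENNReal.toReal_mul, ← ENNReal.toReal_mul,
    ENNReal.toReal_le_toReal (ENNReal.mul_ne_top (hA w₁ hw₁) (hB w₂ hw₂))
      (ENNReal.mul_ne_top (hA w₂ hw₂) (hB w₁ hw₁))]
  exact hcross w₁ hw₁ w₂ hw₂ hw

section Density

variable {Ω : Type*} [MeasurableSpace Ω] {P : Measure Ω} {U : Ω → ℝ} {lam : Measure ℝ}
  {p : ℝ → ℝ}

theorem lintegral_ofReal_rpow_eq_of_map_eq_withDensity (hU : Measurable U) (hp : Measurable p)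
    (hp0 : ∀ x, 0 ≤ p x) (hlaw : P.map U = lam.withDensity fun x => ENNReal.ofReal (p x))
    (w : ℝ) : ∫⁻ ω, ENNReal.ofReal (U ω ^ w) ∂P = ∫⁻ x, ENNReal.ofReal (p x * x ^ w) ∂lam := by
  have hpow : Measurable fun x : ℝ => ENNReal.ofReal (x ^ w) :=
    (measurable_id.pow_const w).ennreal_ofReal
  rw [← lintegral_map hpow hU, hlaw,
    lintegral_withDensity_eq_lintegral_mul _ hp.ennreal_ofReal hpow]
  exact lintegral_congr fun x => (ENNReal.ofReal_mul (hp0 x)).symm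

theorem integral_rpow_eq_toReal_lintegral (hU : Measurable U) (hUpos : ∀ ω, 0 < U ω)
    (hp : Measurable p) (hp0 : ∀ x, 0 ≤ p x)
    (hlaw : P.map U = lam.withDensity fun x => ENNReal.ofReal (p x)) (w : ℝ) :
    ∫ ω, U ω ^ w ∂P = (∫⁻ x, ENNReal.ofReal (p x * x ^ w) ∂lam).toReal := by
  rw [integral_eq_lintegral_of_nonneg_ae
      (ae_of_all _ fun ω => Real.rpow_nonneg (hUpos ω).le w)
      (hU.pow_const w).aestronglyMeasurable,
    lintegral_ofReal_rpow_eq_of_map_eq_withDensity hU hp hp0 hlaw]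

theorem lintegral_ofReal_mul_rpow_ne_top (hU : Measurable U) (hp : Measurable p)
    (hp0 : ∀ x, 0 ≤ p x) (hlaw : P.map U = lam.withDensity fun x => ENNReal.ofReal (p x))
    {w : ℝ} (hint : Integrable (fun ω => U ω ^ w) P) :
    ∫⁻ x, ENNReal.ofReal (p x * x ^ w) ∂lam ≠ ⊤ := by
  rw [← lintegral_ofReal_rpow_eq_of_map_eq_withDensity hU hp hp0 hlaw]
  exact hint.lintegral_lt_top.ne

end Density

theorem moment_ratio_monotone_general
    {Ω₁ Ω₂ : Type} [MeasurableSpace Ω₁] [MeasurableSpace Ω₂]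
    (P₁ : Measure Ω₁) (P₂ : Measure Ω₂)
    [IsProbabilityMeasure P₂]
    (U : Ω₁ → ℝ) (V : Ω₂ → ℝ) (hU : Measurable U) (hV : Measurable V)
    (hUpos : ∀ ω, 0 < U ω) (hVpos : ∀ ω, 0 < V ω)
    (lam : Measure ℝ) (p q : ℝ → ℝ) (hp : Measurable p) (hq : Measurable q)
    (hp0 : ∀ x, 0 ≤ p x) (hq0 : ∀ x, 0 ≤ q x)
    (hsupp : ∀ x ∈ Set.Iic (0 : ℝ), p x = 0 ∧ q x = 0)
    (hUlaw : P₁.map U = lam.withDensity fun x => ENNReal.ofReal (p x))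
    (hVlaw : P₂.map V = lam.withDensity fun x => ENNReal.ofReal (q x))
    (hlr : ∀ x y, x ≤ y → p x * q y ≤ p y * q x)
    (W : ℝ)
    (hint : ∀ w ∈ Set.Icc (0 : ℝ) W,
      Integrable (fun ω => U ω ^ w) P₁ ∧ Integrable (fun ω => V ω ^ w) P₂) :
    MonotoneOn (fun w => (∫ ω, U ω ^ w ∂P₁) / ∫ ω, V ω ^ w ∂P₂) (Set.Icc 0 W) := by
  have hmeas : ∀ (r : ℝ → ℝ), Measurable r → ∀ w : ℝ,
      Measurable fun x => ENNReal.ofReal (r x * x ^ w) :=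
    fun r hr w => (hr.mul (measurable_id.pow_const w)).ennreal_ofReal
  have hratio : MonotoneOn (fun w => (∫⁻ x, ENNReal.ofReal (p x * x ^ w) ∂lam).toReal /
      (∫⁻ x, ENNReal.ofReal (q x * x ^ w) ∂lam).toReal) (Set.Icc 0 W) := by
    refine monotoneOn_toReal_div_toReal
      (fun w hw => lintegral_ofReal_mul_rpow_ne_top hU hp hp0 hUlaw (hint w hw).1)
      (fun w hw => lintegral_ofReal_mul_rpow_ne_top hV hq hq0 hVlaw (hint w hw).2)
      (fun w hw => ?_)
      (fun w₁ _ w₂ _ hw => lintegral_mul_lintegral_le_of_swap_le (hmeas p hp w₁)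
        (hmeas p hp w₂) (hmeas q hq w₁) (hmeas q hq w₂)
        (ofReal_mul_rpow_swap_le hp0 hq0 hsupp hlr hw))
    rw [← integral_rpow_eq_toReal_lintegral hV hVpos hq hq0 hVlaw]
    exact integral_pos_of_forall_pos (fun ω => Real.rpow_pos_of_pos (hVpos ω) w) (hint w hw).2
  refine hratio.congr fun w _ => ?_
  simp only [integral_rpow_eq_toReal_lintegral hU hUpos hp hp0 hUlaw,
    integral_rpow_eq_toReal_lintegral hV hVpos hq hq0 hVlaw]

/-- Monotonicity of moment ratios under likelihood-ratio ordering: if positive random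
variables `U`, `V` have densities `p`, `q` (w.r.t. a common dominating measure on
`(0,∞)`) with `p/q` nondecreasing (stated via the cross-product condition), and all
moments `E[U^w]`, `E[V^w]` for `w ∈ [0, W]` are finite, then
`w ↦ E[U^w]/E[V^w]` is nondecreasing on `[0, W]`. -/
theorem moment_ratio_monotone
    {Ω₁ Ω₂ : Type} [MeasurableSpace Ω₁] [MeasurableSpace Ω₂]
    (P₁ : Measure Ω₁) (P₂ : Measure Ω₂)
    [IsProbabilityMeasure P₁] [IsProbabilityMeasure P₂]
    (U : Ω₁ → ℝ) (V : Ω₂ → ℝ) (hU : Measurable U) (hV : Measurable V)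
    (hUpos : ∀ ω, 0 < U ω) (hVpos : ∀ ω, 0 < V ω)
    (lam : Measure ℝ) (p q : ℝ → ℝ) (hp : Measurable p) (hq : Measurable q)
    (hp0 : ∀ x, 0 ≤ p x) (hq0 : ∀ x, 0 ≤ q x)
    (hsupp : ∀ x ∈ Set.Iic (0 : ℝ), p x = 0 ∧ q x = 0)
    (hUlaw : P₁.map U = lam.withDensity fun x => ENNReal.ofReal (p x))
    (hVlaw : P₂.map V = lam.withDensity fun x => ENNReal.ofReal (q x))
    (hlr : ∀ x y, x ≤ y → p x * q y ≤ p y * q x)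
    (W : ℝ)
    (hint : ∀ w ∈ Set.Icc (0 : ℝ) W,
      Integrable (fun ω => U ω ^ w) P₁ ∧ Integrable (fun ω => V ω ^ w) P₂) :
    MonotoneOn (fun w => (∫ ω, U ω ^ w ∂P₁) / ∫ ω, V ω ^ w ∂P₂) (Set.Icc 0 W) :=
  moment_ratio_monotone_general P₁ P₂ U V hU hV hUpos hVpos lam p q hp hq hp0 hq0 hsupp hUlaw hVlaw
    hlr W hint
end

section
/- In the two-group Gaussian setting with ℓ(x) = exp(βᵀx), X₀ | A = a ~ N(μ_a, Σ₀) with common covariance Σ₀, prior π_a, and Q^w(a) = π_a M_a(w)/Σ_{a'} π_{a'} M_{a'}(w): if βᵀμ₁ > βᵀμ₂ then w ↦ Q^w(1) is strictly increasing in w ≥ 0 and Q^w(1) → 1 as w → ∞. -/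
open MeasureTheory Matrix Filter

/-- The multivariate Gaussian measure `N(m, S)` on `ℝ^d`, defined through its Lebesgue
density. -/
noncomputable def multiGaussian (d : ℕ) (m : Fin d → ℝ) (S : Matrix (Fin d) (Fin d) ℝ) :
    Measure (Fin d → ℝ) :=
  volume.withDensity fun x =>
    ENNReal.ofReal ((2 * Real.pi) ^ (-(d : ℝ) / 2) * S.det ^ (-(1 : ℝ) / 2) *
      Real.exp (-(1 / 2) * ((x - m) ⬝ᵥ (S⁻¹ *ᵥ (x - m)))))

/-!
Translating the density gives `M a w = exp (w * (β ⬝ᵥ μv a)) * G w`, where `G` is the moment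
generating function of `y ↦ β ⬝ᵥ y` under the centred Gaussian `N(0, S0)`. By compactness of the
unit sphere the quadratic form of `S0⁻¹` dominates a multiple of `∑ yᵢ²`, so `G w` is finite and
positive and cancels in `Q w`, leaving the logistic function
`Q w 0 = pr 0 / (pr 0 + pr 1 * exp (w * δ))` with `δ = β ⬝ᵥ μv 1 - β ⬝ᵥ μv 0 < 0`.
-/

open ProbabilityTheory

theorem exists_pos_mul_norm_sq_le {E : Type*} [NormedAddCommGroup E] [NormedSpace ℝ E]
    [FiniteDimensional ℝ E] {q : E → ℝ} (hq : Continuous q)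
    (hsmul : ∀ (t : ℝ) (x : E), q (t • x) = t ^ 2 * q x) (hpos : ∀ x ≠ 0, 0 < q x) :
    ∃ c > 0, ∀ x, c * ‖x‖ ^ 2 ≤ q x := by
  have hq0 : q 0 = 0 := by simpa using hsmul 0 0
  rcases subsingleton_or_nontrivial E with hE | hE
  · exact ⟨1, one_pos, fun x => by simp [Subsingleton.elim x 0, hq0]⟩
  obtain ⟨z, hz, hmin⟩ := (isCompact_sphere (0 : E) 1).exists_isMinOn
    (NormedSpace.sphere_nonempty.2 zero_le_one) hq.continuousOn
  refine ⟨q z, hpos z (ne_zero_of_mem_unit_sphere ⟨z, hz⟩), fun x => ?_⟩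
  rcases eq_or_ne x 0 with rfl | hx
  · simp [hq0]
  have hu : ‖x‖⁻¹ • x ∈ Metric.sphere (0 : E) 1 := by simp [norm_smul, hx]
  calc q z * ‖x‖ ^ 2 ≤ q (‖x‖⁻¹ • x) * ‖x‖ ^ 2 := by gcongr; exact hmin hu
    _ = q x := by rw [hsmul]; field_simp

theorem Matrix.PosDef.exists_pos_mul_sum_sq_le {ι : Type*} [Fintype ι] {A : Matrix ι ι ℝ}
    (hA : A.PosDef) : ∃ c > 0, ∀ x : ι → ℝ, c * ∑ i, x i ^ 2 ≤ x ⬝ᵥ (A *ᵥ x) := by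
  obtain ⟨c, hc, h⟩ := exists_pos_mul_norm_sq_le (E := EuclideanSpace ℝ ι)
    (q := fun x => x.ofLp ⬝ᵥ (A *ᵥ x.ofLp)) (by fun_prop)
    (fun t x => by simp [mulVec_smul]; ring)
    (fun x hx => by simpa using hA.dotProduct_mulVec_pos (x := x.ofLp) (by simpa using hx))
  exact ⟨c, hc, fun x => by simpa [EuclideanSpace.real_norm_sq_eq] using h (WithLp.toLp 2 x)⟩

theorem Matrix.PosDef.integrable_exp_dotProduct_sub {ι : Type*} [Fintype ι]
    {A : Matrix ι ι ℝ} (hA : A.PosDef) (b : ι → ℝ) :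
    Integrable fun x : ι → ℝ => Real.exp (b ⬝ᵥ x - x ⬝ᵥ (A *ᵥ x) / 2) := by
  obtain ⟨c, hc, hcA⟩ := hA.exists_pos_mul_sum_sq_le
  have hmaj : Integrable fun x : ι → ℝ => Real.exp (-(c / 2) * ∑ i, x i ^ 2 + ∑ i, b i * x i) := by
    refine (GaussianFourier.integrable_cexp_neg_mul_sum_add (b := ((c / 2 : ℝ) : ℂ))
      (by simpa using hc) (fun i => (b i : ℂ))).norm.congr (Eventually.of_forall fun x => ?_)
    simp [Complex.norm_exp, ← Complex.ofReal_pow]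
  refine hmaj.mono' (by fun_prop) (Eventually.of_forall fun x => ?_)
  rw [Real.norm_of_nonneg (Real.exp_pos _).le]
  exact Real.exp_le_exp.2 (by have := hcA x; simp only [dotProduct] at *; linarith)

noncomputable def multiGaussianPDF (d : ℕ) (S : Matrix (Fin d) (Fin d) ℝ) (y : Fin d → ℝ) : ℝ :=
  (2 * Real.pi) ^ (-(d : ℝ) / 2) * S.det ^ (-(1 : ℝ) / 2) *
    Real.exp (-(1 / 2) * (y ⬝ᵥ (S⁻¹ *ᵥ y)))

section multiGaussian

variable {d : ℕ} {S : Matrix (Fin d) (Fin d) ℝ}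

theorem multiGaussian_eq_withDensity (m : Fin d → ℝ) :
    multiGaussian d m S =
      volume.withDensity fun x => ENNReal.ofReal (multiGaussianPDF d S (x - m)) :=
  rfl

@[fun_prop]
theorem continuous_multiGaussianPDF : Continuous (multiGaussianPDF d S) := by
  unfold multiGaussianPDF
  fun_prop

theorem multiGaussianPDF_pos (hS : S.PosDef) (y : Fin d → ℝ) : 0 < multiGaussianPDF d S y := by
  have := hS.det_pos
  unfold multiGaussianPDF
  positivity

theorem integral_multiGaussian_eq_integral_add {E : Type*} [NormedAddCommGroup E]
    [NormedSpace ℝ E] (m : Fin d → ℝ) (f : (Fin d → ℝ) → E) :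
    ∫ x, f x ∂multiGaussian d m S = ∫ y, f (y + m) ∂multiGaussian d 0 S := by
  simp only [multiGaussian_eq_withDensity, ENNReal.ofReal]
  rw [integral_withDensity_eq_integral_smul (by fun_prop),
    integral_withDensity_eq_integral_smul (by fun_prop)]
  simpa using (integral_add_right_eq_self
    (fun x => (multiGaussianPDF d S (x - m)).toNNReal • f x) m).symm

theorem multiGaussian_ne_zero (hS : S.PosDef) (m : Fin d → ℝ) : multiGaussian d m S ≠ 0 := by
  rw [multiGaussian_eq_withDensity, Ne, withDensity_eq_zero_iff (by fun_prop)]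
  intro h
  obtain ⟨x, hx⟩ := h.exists
  simp only [Pi.zero_apply, ENNReal.ofReal_eq_zero] at hx
  exact (multiGaussianPDF_pos hS _).not_ge hx

theorem integrable_exp_mul_dotProduct_multiGaussian (hS : S.PosDef) (β : Fin d → ℝ) (t : ℝ) :
    Integrable (fun y => Real.exp (t * (β ⬝ᵥ y))) (multiGaussian d 0 S) := by
  rw [multiGaussian_eq_withDensity, integrable_withDensity_iff (by fun_prop) (by simp)]
  refine ((hS.inv.integrable_exp_dotProduct_sub (t • β)).const_mul
    ((2 * Real.pi) ^ (-(d : ℝ) / 2) * S.det ^ (-(1 : ℝ) / 2))).congr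
    (Eventually.of_forall fun y => ?_)
  simp only [sub_zero]
  rw [ENNReal.toReal_ofReal (multiGaussianPDF_pos hS y).le]
  simp only [multiGaussianPDF, smul_dotProduct, smul_eq_mul]
  rw [sub_eq_add_neg, Real.exp_add]
  ring_nf

theorem mgf_dotProduct_multiGaussian_pos (hS : S.PosDef) (β : Fin d → ℝ) (t : ℝ) :
    0 < mgf (β ⬝ᵥ ·) (multiGaussian d 0 S) t :=
  mgf_pos' (multiGaussian_ne_zero hS 0) (integrable_exp_mul_dotProduct_multiGaussian hS β t)

theorem integral_exp_dotProduct_rpow_multiGaussian (β m : Fin d → ℝ) (w : ℝ) :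
    ∫ z, Real.exp (β ⬝ᵥ z) ^ w ∂multiGaussian d m S =
      Real.exp (w * (β ⬝ᵥ m)) * mgf (β ⬝ᵥ ·) (multiGaussian d 0 S) w := by
  rw [integral_multiGaussian_eq_integral_add, mgf, ← integral_const_mul]
  congr 1 with y
  rw [← Real.exp_mul, ← Real.exp_add, dotProduct_add]
  ring_nf

end multiGaussian

theorem div_add_mul_exp_eq {p q s t G w : ℝ} (hG : 0 < G) :
    p * (Real.exp (w * s) * G) / (p * (Real.exp (w * s) * G) + q * (Real.exp (w * t) * G)) =
      p / (p + q * Real.exp (w * (t - s))) := by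
  have hexp : Real.exp (w * t) = Real.exp (w * s) * Real.exp (w * (t - s)) := by
    rw [← Real.exp_add]; ring_nf
  rw [hexp, ← mul_div_mul_right p _ (mul_pos (Real.exp_pos (w * s)) hG).ne']
  ring_nf

theorem strictMono_div_add_mul_exp {p q δ : ℝ} (hp : 0 < p) (hq : 0 < q) (hδ : δ < 0) :
    StrictMono fun w => p / (p + q * Real.exp (w * δ)) := by
  intro v w hvw
  have hexp : Real.exp (w * δ) < Real.exp (v * δ) := Real.exp_lt_exp.2 (by nlinarith)
  dsimp only
  gcongr

theorem tendsto_div_add_mul_exp_atTop {p q δ : ℝ} (hp : 0 < p) (hδ : δ < 0) :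
    Tendsto (fun w => p / (p + q * Real.exp (w * δ))) atTop (nhds 1) := by
  have hexp : Tendsto (fun w => Real.exp (w * δ)) atTop (nhds 0) :=
    Real.tendsto_exp_atBot.comp (tendsto_id.atTop_mul_const_of_neg hδ)
  have hden : Tendsto (fun w => p + q * Real.exp (w * δ)) atTop (nhds p) := by
    simpa using tendsto_const_nhds.add (hexp.const_mul q)
  exact div_self hp.ne' ▸ (tendsto_const_nhds (x := p)).div hden hp.ne'

theorem two_group_bias_amplification_general
    (d : ℕ) (β : Fin d → ℝ) (μv : Fin 2 → Fin d → ℝ)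
    (S0 : Matrix (Fin d) (Fin d) ℝ) (hS0 : S0.PosDef)
    (pr : Fin 2 → ℝ) (hpr : ∀ a, 0 < pr a)
    (M : Fin 2 → ℝ → ℝ)
    (hM : ∀ a w, M a w = ∫ z, Real.exp (β ⬝ᵥ z) ^ w ∂(multiGaussian d (μv a) S0))
    (Q : ℝ → Fin 2 → ℝ)
    (hQ : ∀ w a, Q w a = pr a * M a w / (pr 0 * M 0 w + pr 1 * M 1 w))
    (hlt : β ⬝ᵥ μv 1 < β ⬝ᵥ μv 0) :
    StrictMonoOn (fun w => Q w 0) (Set.Ici 0)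
    ∧ Tendsto (fun w => Q w 0) atTop (nhds 1) := by
  have hQ0 : (fun w => Q w 0) =
      fun w => pr 0 / (pr 0 + pr 1 * Real.exp (w * (β ⬝ᵥ μv 1 - β ⬝ᵥ μv 0))) := by
    ext w
    simp only [hQ, hM, integral_exp_dotProduct_rpow_multiGaussian]
    exact div_add_mul_exp_eq (mgf_dotProduct_multiGaussian_pos hS0 β w)
  have hδ : β ⬝ᵥ μv 1 - β ⬝ᵥ μv 0 < 0 := sub_neg.2 hlt
  rw [hQ0]
  exact ⟨(strictMono_div_add_mul_exp (hpr 0) (hpr 1) hδ).strictMonoOn _,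
    tendsto_div_add_mul_exp_atTop (hpr 0) hδ⟩

/-- Two-group Gaussian setting with `ℓ(x) = exp(βᵀx)`, common covariance `Σ₀`, and
guided group marginal `Q^w(a) = π_a M_a(w) / Σ_{a'} π_{a'} M_{a'}(w)`: if
`βᵀμ₀ > βᵀμ₁` then `w ↦ Q^w(0)` is strictly increasing on `w ≥ 0` and `Q^w(0) → 1` as
`w → ∞` — guidance bias grows monotonically with the guidance scale and the favored
group eventually dominates. -/
theorem two_group_bias_amplification
    (d : ℕ) (β : Fin d → ℝ) (μv : Fin 2 → Fin d → ℝ)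
    (S0 : Matrix (Fin d) (Fin d) ℝ) (hS0 : S0.PosDef)
    (pr : Fin 2 → ℝ) (hpr : ∀ a, 0 < pr a) (hsum : pr 0 + pr 1 = 1)
    (M : Fin 2 → ℝ → ℝ)
    (hM : ∀ a w, M a w = ∫ z, Real.exp (β ⬝ᵥ z) ^ w ∂(multiGaussian d (μv a) S0))
    (Q : ℝ → Fin 2 → ℝ)
    (hQ : ∀ w a, Q w a = pr a * M a w / (pr 0 * M 0 w + pr 1 * M 1 w))
    (hlt : β ⬝ᵥ μv 1 < β ⬝ᵥ μv 0) :
    StrictMonoOn (fun w => Q w 0) (Set.Ici 0)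
    ∧ Tendsto (fun w => Q w 0) atTop (nhds 1) :=
  two_group_bias_amplification_general d β μv S0 hS0 pr hpr M hM Q hQ hlt
end
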